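/- Let V be a finite set, let B ⊆ 2^V be a nonempty Sperner hypergraph, and define Ψ = {(A, v) : A ∈ B^*, v ∈ V∖A, v ∉ ∪B^{V∖A}}. Let φ be a finite set of pairs (A, v) with A ⊆ V, v ∈ V∖A, such that no clause A → v with (A, v) ∈ φ is an implicate of Φ_B. Let h be the pure Horn function whose true assignments are the true assignments of Φ_B that additionally satisfy every clause A → v with (A, v) ∈ φ. Then K(h) = B if and only if φ ⊆ Ψ. -/

import Mathlib

open scoped Classical

variable {V : Type*} [Fintype V] [DecidableEq V]

/-- A Sperner hypergraph: no hyperedge contains another one. -/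
def SpernerFam (𝓑 : Set (Finset V)) : Prop :=
  ∀ B₁ ∈ 𝓑, ∀ B₂ ∈ 𝓑, B₁ ⊆ B₂ → B₁ = B₂

/-- `T` is a transversal of `𝓑` if it meets every hyperedge. -/
def IsTransversal (𝓑 : Set (Finset V)) (T : Finset V) : Prop :=
  ∀ B ∈ 𝓑, (T ∩ B).Nonempty

/-- `𝓑^d`: the family of inclusion-minimal transversals of `𝓑`. -/
def dualHyp (𝓑 : Set (Finset V)) : Set (Finset V) :=
  {T | IsTransversal 𝓑 T ∧ ∀ T', IsTransversal 𝓑 T' → T' ⊆ T → T' = T}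

/-- `𝓑_S`: the subhypergraph of `𝓑` induced by `S`. -/
def inducedHyp (𝓑 : Set (Finset V)) (S : Finset V) : Set (Finset V) :=
  {B | B ∈ 𝓑 ∧ B ⊆ S}

/-- `𝓑^S`: the family of inclusion-minimal members of `{S ∩ B : B ∈ 𝓑}`,
the projection of `𝓑` to `S`. -/
def projHyp (𝓑 : Set (Finset V)) (S : Finset V) : Set (Finset V) :=
  {C | (∃ B ∈ 𝓑, C = S ∩ B) ∧ ∀ B ∈ 𝓑, S ∩ B ⊆ C → S ∩ B = C}

/-- A Boolean function `h` on `V` is pure Horn if its set of true assignments contains the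
all-true assignment and is closed under componentwise AND. -/
def PureHorn (h : (V → Bool) → Bool) : Prop :=
  h (fun _ => true) = true ∧
  ∀ x y : V → Bool, h x = true → h y = true → h (fun v => x v && y v) = true

/-- The clause `A → v` is an implicate of `h`: every true assignment of `h` that is true on
every element of `A` is also true at `v`. -/
def Implicate (h : (V → Bool) → Bool) (A : Finset V) (v : V) : Prop :=
  ∀ x : V → Bool, h x = true → (∀ a ∈ A, x a = true) → x v = true

/-- `K` is a key of `h` if `K → v` is an implicate of `h` for every `v ∈ V \ K`. -/
def IsKey (h : (V → Bool) → Bool) (K : Finset V) : Prop :=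
  ∀ v ∉ K, Implicate h K v

/-- `𝒦(h)`: the family of inclusion-minimal keys of `h`. -/
def minKeys (h : (V → Bool) → Bool) : Set (Finset V) :=
  {K | IsKey h K ∧ ∀ K', IsKey h K' → K' ⊆ K → K' = K}

/-- `Φ_𝓑`: the pure Horn function whose true assignments are exactly those `x` such that for
every `B ∈ 𝓑` on which `x` is identically true, `x` is identically true on all of `V`. -/
noncomputable def PhiB (𝓑 : Set (Finset V)) : (V → Bool) → Bool :=
  fun x => decide (∀ B ∈ 𝓑, (∀ u ∈ B, x u = true) → ∀ v : V, x v = true)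

/-- `S` is an independent set of `𝓑`: its complement is a transversal. -/
def IndepOf (𝓑 : Set (Finset V)) (S : Finset V) : Prop :=
  IsTransversal 𝓑 (Finset.univ \ S)

/-!
The true points of `h` other than the all-true one are the indicators of the `h`-closed sets:
sets that contain no edge of `𝓑` and are closed under the clauses of `φ`. As `𝓑 ≠ ∅`, the keys
of `h` are the sets contained in no closed set, and every edge is a key. If `φ ⊆ Ψ`, a maximal
edge-free superset `S` of an edge-free set is closed: if a clause `(A, v)` failed on `S`, the
edge inside `insert v S` would project onto `V ∖ A` above some `C ∈ 𝓑^{V∖A}`, and as `v ∉ C`, the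
edge behind `C` would lie in `A ∪ C ⊆ S`. So the keys are the supersets of edges, and
`𝒦(h) = 𝓑` because `𝓑` is Sperner. Conversely, if `v ∈ C ∈ 𝓑^{V∖A}` for a clause `(A, v)`,
then `A ∪ (C ∖ {v})` is a key; a minimal key inside it is an edge whose projection onto `V ∖ A`
is strictly smaller than `C`.
-/

open Finset

/-- The function `h` of the theorem. -/
noncomputable def constrainedPhi (𝓑 : Set (Finset V)) (φ : Finset (Finset V × V)) :
    (V → Bool) → Bool :=
  fun x => PhiB 𝓑 x && decide (∀ c ∈ φ, (∃ a ∈ c.1, x a = false) ∨ x c.2 = true)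

def IsHornClosed (𝓑 : Set (Finset V)) (φ : Finset (Finset V × V)) (S : Finset V) : Prop :=
  (∀ B ∈ 𝓑, ¬ B ⊆ S) ∧ ∀ c ∈ φ, c.1 ⊆ S → c.2 ∈ S

omit [Fintype V] [DecidableEq V] in
theorem mem_minKeys_iff_minimal {h : (V → Bool) → Bool} {K : Finset V} :
    K ∈ minKeys h ↔ Minimal (IsKey h) K := by
  rw [minimal_iff]
  exact and_congr_right fun _ => forall₂_congr fun _ _ => ⟨fun h' hle => (h' hle).symm,
    fun h' hle => (h' hle).symm⟩

omit [Fintype V] [DecidableEq V] in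
theorem exists_mem_minKeys_subset {h : (V → Bool) → Bool} {K : Finset V} (hK : IsKey h K) :
    ∃ K' ∈ minKeys h, K' ⊆ K := by
  obtain ⟨K', hK'K, hmin⟩ := exists_minimal_le_of_wellFoundedLT (IsKey h) K hK
  exact ⟨K', mem_minKeys_iff_minimal.2 hmin, hK'K⟩

omit [Fintype V] [DecidableEq V] in
theorem minKeys_eq_of_isKey_iff {𝓑 : Set (Finset V)} (hSp : SpernerFam 𝓑)
    {h : (V → Bool) → Bool} (hkey : ∀ K, IsKey h K ↔ ∃ B ∈ 𝓑, B ⊆ K) : minKeys h = 𝓑 := by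
  ext K
  rw [mem_minKeys_iff_minimal, minimal_iff]
  constructor
  · rintro ⟨hK, hmin⟩
    obtain ⟨B, hB, hBK⟩ := (hkey K).1 hK
    exact hmin ((hkey B).2 ⟨B, hB, subset_rfl⟩) hBK ▸ hB
  · intro hK
    refine ⟨(hkey K).2 ⟨K, hK, subset_rfl⟩, fun K' hK' hK'K => ?_⟩
    obtain ⟨B, hB, hBK'⟩ := (hkey K').1 hK'
    exact subset_antisymm (hSp B hB K hK (hBK'.trans hK'K) ▸ hBK') hK'K

theorem implicate_phiB_of_subset {𝓑 : Set (Finset V)} {A B : Finset V} (hB : B ∈ 𝓑)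
    (hBA : B ⊆ A) (v : V) : Implicate (PhiB 𝓑) A v := by
  intro x hx hxA
  exact (decide_eq_true_iff.1 hx) B hB (fun u hu => hxA u (hBA hu)) v

theorem indepOf_iff_forall_not_subset {𝓑 : Set (Finset V)} {A : Finset V} :
    IndepOf 𝓑 A ↔ ∀ B ∈ 𝓑, ¬ B ⊆ A := by
  refine forall₂_congr fun B _ => ?_
  simp [Finset.Nonempty, not_subset, and_comm]

theorem indepOf_of_not_implicate {𝓑 : Set (Finset V)} {A : Finset V} {v : V}
    (h : ¬ Implicate (PhiB 𝓑) A v) : IndepOf 𝓑 A :=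
  indepOf_iff_forall_not_subset.2 fun _ hB hBA => h (implicate_phiB_of_subset hB hBA v)

omit [Fintype V] in
theorem exists_mem_projHyp_subset {𝓑 : Set (Finset V)} {S B : Finset V} (hB : B ∈ 𝓑) :
    ∃ C ∈ projHyp 𝓑 S, C ⊆ S ∩ B := by
  obtain ⟨C, hCB, ⟨B', hB', rfl⟩, hmin⟩ :=
    exists_minimal_le_of_wellFoundedLT (fun C => ∃ B' ∈ 𝓑, C = S ∩ B') (S ∩ B) ⟨B, hB, rfl⟩
  exact ⟨S ∩ B', ⟨⟨B', hB', rfl⟩, fun B'' hB'' hle =>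
    subset_antisymm hle (hmin ⟨B'', hB'', rfl⟩ hle)⟩, hCB⟩

theorem exists_subset_union_of_mem_projHyp {𝓑 : Set (Finset V)} {A C : Finset V}
    (hC : C ∈ projHyp 𝓑 (univ \ A)) : ∃ B ∈ 𝓑, B ⊆ A ∪ C := by
  obtain ⟨⟨B, hB, rfl⟩, -⟩ := hC
  refine ⟨B, hB, fun u hu => ?_⟩
  by_cases huA : u ∈ A <;> simp [huA, hu]

section constrainedPhi

variable {𝓑 : Set (Finset V)} {φ : Finset (Finset V × V)}

theorem constrainedPhi_eq_true_iff (x : V → Bool) :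
    constrainedPhi 𝓑 φ x = true ↔
      (∀ v, x v = true) ∨ IsHornClosed 𝓑 φ {u | x u = true} := by
  unfold constrainedPhi PhiB
  rw [Bool.and_eq_true, decide_eq_true_iff, decide_eq_true_iff]
  by_cases hall : ∀ v, x v = true
  · simp [hall]
  · simp only [hall, false_or, IsHornClosed]
    exact and_congr (forall₂_congr fun B _ => by simp [subset_iff])
      (forall₂_congr fun c _ => by simp [subset_iff, or_iff_not_imp_left])

theorem isKey_constrainedPhi_iff (hne : 𝓑.Nonempty) {K : Finset V} :
    IsKey (constrainedPhi 𝓑 φ) K ↔ ∀ S, IsHornClosed 𝓑 φ S → ¬ K ⊆ S := by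
  constructor
  · intro hK S hS hKS
    have hx : constrainedPhi 𝓑 φ (fun u => decide (u ∈ S)) = true :=
      (constrainedPhi_eq_true_iff _).2 (Or.inr (by simpa using hS))
    have hSuniv : ∀ v, v ∈ S := fun v => by
      by_cases hv : v ∈ K
      · exact hKS hv
      · simpa using hK v hv _ hx fun a ha => by simpa using hKS ha
    obtain ⟨B, hB⟩ := hne
    exact hS.1 B hB fun u _ => hSuniv u
  · intro hK v _ x hx hxK
    rcases (constrainedPhi_eq_true_iff x).1 hx with hall | hS
    · exact hall v
    · exact absurd (fun a ha => by simpa using hxK a ha) (hK _ hS)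

theorem isHornClosed_of_maximal
    (hΨ : ∀ c ∈ φ, ∀ C ∈ projHyp 𝓑 (univ \ c.1), c.2 ∉ C) {S : Finset V}
    (hS : Maximal (fun S => ∀ B ∈ 𝓑, ¬ B ⊆ S) S) : IsHornClosed 𝓑 φ S := by
  refine ⟨hS.1, fun c hc hAS => ?_⟩
  by_contra hvS
  have hnot_free : ¬ ∀ B ∈ 𝓑, ¬ B ⊆ insert c.2 S := fun hfree =>
    hvS (hS.2 hfree (subset_insert _ _) (mem_insert_self _ _))
  push Not at hnot_free
  obtain ⟨B, hB, hBS⟩ := hnot_free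
  obtain ⟨C, hC, hCB⟩ := exists_mem_projHyp_subset (S := univ \ c.1) hB
  have hCS : C ⊆ S := fun u hu => (mem_insert.1 (hBS (mem_inter.1 (hCB hu)).2)).resolve_left
    fun h => hΨ c hc C hC (h ▸ hu)
  obtain ⟨B', hB', hB'AC⟩ := exists_subset_union_of_mem_projHyp hC
  exact hS.1 B' hB' (hB'AC.trans (union_subset hAS hCS))

theorem minKeys_constrainedPhi_eq (hne : 𝓑.Nonempty) (hSp : SpernerFam 𝓑)
    (hΨ : ∀ c ∈ φ, ∀ C ∈ projHyp 𝓑 (univ \ c.1), c.2 ∉ C) :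
    minKeys (constrainedPhi 𝓑 φ) = 𝓑 := by
  refine minKeys_eq_of_isKey_iff hSp fun K => ⟨fun hK => ?_, fun ⟨B, hB, hBK⟩ => ?_⟩
  · by_contra! hfree
    obtain ⟨S, hKS, hS⟩ :=
      exists_maximal_ge_of_wellFoundedGT (fun S => ∀ B ∈ 𝓑, ¬ B ⊆ S) K hfree
    exact (isKey_constrainedPhi_iff hne).1 hK S (isHornClosed_of_maximal hΨ hS) hKS
  · exact (isKey_constrainedPhi_iff hne).2 fun S hS hKS => hS.1 B hB (hBK.trans hKS)

theorem notMem_of_mem_projHyp_of_minKeys_eq (hne : 𝓑.Nonempty)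
    (hmk : minKeys (constrainedPhi 𝓑 φ) = 𝓑) {c : Finset V × V} (hc : c ∈ φ) {C : Finset V}
    (hC : C ∈ projHyp 𝓑 (univ \ c.1)) : c.2 ∉ C := by
  intro hvC
  obtain ⟨B, hB, hBAC⟩ := exists_subset_union_of_mem_projHyp hC
  have hkey : IsKey (constrainedPhi 𝓑 φ) (c.1 ∪ C.erase c.2) :=
    (isKey_constrainedPhi_iff hne).2 fun S hS hKS => by
      have hAS : c.1 ⊆ S := subset_union_left.trans hKS
      have hCS : C ⊆ S := fun u hu => by
        by_cases huv : u = c.2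
        · exact huv ▸ hS.2 c hc hAS
        · exact hKS (mem_union_right _ (mem_erase.2 ⟨huv, hu⟩))
      exact hS.1 B hB (hBAC.trans (union_subset hAS hCS))
  obtain ⟨K, hK, hKsub⟩ := exists_mem_minKeys_subset hkey
  rw [hmk] at hK
  have htrace : (univ \ c.1) ∩ K ⊆ C.erase c.2 := fun u hu => by
    obtain ⟨huA, huK⟩ := mem_inter.1 hu
    exact (mem_union.1 (hKsub huK)).resolve_left (mem_sdiff.1 huA).2
  have hCeq := hC.2 K hK (htrace.trans (erase_subset _ _))
  exact notMem_erase c.2 C (htrace (hCeq ▸ hvC))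

end constrainedPhi

theorem stmt4_general (𝓑 : Set (Finset V)) (hne : 𝓑.Nonempty) (hSp : SpernerFam 𝓑)
    (φ : Finset (Finset V × V))
    (hni : ∀ c ∈ φ, ¬ Implicate (PhiB 𝓑) c.1 c.2) :
    minKeys (fun x => PhiB 𝓑 x &&
        decide (∀ c ∈ φ, (∃ a ∈ c.1, x a = false) ∨ x c.2 = true)) = 𝓑 ↔
      ∀ c ∈ φ, IndepOf 𝓑 c.1 ∧
        c.2 ∉ ⋃ C ∈ projHyp 𝓑 (Finset.univ \ c.1), (C : Set V) := by
  simp only [Set.mem_iUnion₂, Finset.mem_coe, not_exists]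
  constructor
  · exact fun hmk c hc => ⟨indepOf_of_not_implicate (hni c hc),
      fun C hC => notMem_of_mem_projHyp_of_minKeys_eq hne hmk hc hC⟩
  · exact fun hΨ => minKeys_constrainedPhi_eq hne hSp fun c hc => (hΨ c hc).2

/-- Let `𝓑` be a nonempty Sperner hypergraph, and let `φ` be a finite set of clauses
`(A, v)` (with `v ∉ A`), none of which is an implicate of `Φ_𝓑`. Let `h` be the pure Horn
function whose true assignments are the true assignments of `Φ_𝓑` additionally satisfying
all clauses of `φ`. Then `𝒦(h) = 𝓑` iff `φ ⊆ Ψ`, where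
`Ψ = {(A, v) : A ∈ 𝓑^*, v ∈ V∖A, v ∉ ∪ 𝓑^{V∖A}}`. -/
theorem stmt4 (𝓑 : Set (Finset V)) (hne : 𝓑.Nonempty) (hSp : SpernerFam 𝓑)
    (φ : Finset (Finset V × V))
    (hv : ∀ c ∈ φ, c.2 ∉ c.1)
    (hni : ∀ c ∈ φ, ¬ Implicate (PhiB 𝓑) c.1 c.2) :
    minKeys (fun x => PhiB 𝓑 x &&
        decide (∀ c ∈ φ, (∃ a ∈ c.1, x a = false) ∨ x c.2 = true)) = 𝓑 ↔
      ∀ c ∈ φ, IndepOf 𝓑 c.1 ∧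
        c.2 ∉ ⋃ C ∈ projHyp 𝓑 (Finset.univ \ c.1), (C : Set V) :=
  stmt4_general 𝓑 hne hSp φ hni
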